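/- arXiv:2407.06608 — 2 statements merged into one kernel-verified Lean document; each statement's English description precedes it below -/
import Mathlib

section
/- Let P, Q ⊆ ℝ^N be closed convex polyhedra (finite intersections of closed half-spaces). If dist(P, Q) = inf{‖p − q‖ : p ∈ P, q ∈ Q} = 0, then P ∩ Q ≠ ∅. -/
open scoped RealInnerProductSpace

section FourierMotzkin

variable {V W : Type*} [NormedAddCommGroup V] [NormedSpace ℝ V]
  [NormedAddCommGroup W] [NormedSpace ℝ W]

/-- A set is a polyhedron: intersection of finitely many closed half-spaces,
given by a finite set of (continuous linear functional, bound) constraints. -/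
def MyIsPoly (S : Set V) : Prop :=
  ∃ T : Finset ((V →L[ℝ] ℝ) × ℝ), S = {x | ∀ r ∈ T, r.1 x ≤ r.2}

lemma MyIsPoly.isClosed {S : Set V} (h : MyIsPoly S) : IsClosed S := by
  obtain ⟨T, rfl⟩ := h
  have : {x : V | ∀ r ∈ T, r.1 x ≤ r.2} = ⋂ r ∈ T, {x | r.1 x ≤ r.2} := by
    ext x; simp
  rw [this]
  exact isClosed_biInter fun r _ => isClosed_le r.1.continuous continuous_const

lemma MyIsPoly.inter {S S' : Set V} (h : MyIsPoly S) (h' : MyIsPoly S') :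
    MyIsPoly (S ∩ S') := by
  classical
  obtain ⟨T, rfl⟩ := h; obtain ⟨T', rfl⟩ := h'
  exact ⟨T ∪ T', by ext x; simp [Finset.mem_union, or_imp, forall_and]⟩

lemma MyIsPoly.preimage {S : Set V} (h : MyIsPoly S) (f : W →L[ℝ] V) :
    MyIsPoly (f ⁻¹' S) := by
  classical
  obtain ⟨T, rfl⟩ := h
  refine ⟨T.image (fun r => (r.1.comp f, r.2)), ?_⟩
  ext x
  constructor
  · intro hx r hr
    simp only [Finset.mem_image] at hr
    obtain ⟨s, hs, rfl⟩ := hr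
    exact hx s hs
  · intro hx r hr
    exact hx _ (Finset.mem_image_of_mem _ hr)

lemma exists_between_finsets {ι : Type*} (A B : Finset ι) (f g : ι → ℝ)
    (h : ∀ a ∈ A, ∀ b ∈ B, f a ≤ g b) :
    ∃ t : ℝ, (∀ a ∈ A, f a ≤ t) ∧ (∀ b ∈ B, t ≤ g b) := by
  rcases A.eq_empty_or_nonempty with hA | hA
  · rcases B.eq_empty_or_nonempty with hB | hB
    · exact ⟨0, by simp [hA], by simp [hB]⟩
    · exact ⟨B.inf' hB g, by simp [hA], fun b hb => Finset.inf'_le _ hb⟩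
  · refine ⟨A.sup' hA f, fun a ha => Finset.le_sup' _ ha, fun b hb => ?_⟩
    exact Finset.sup'_le _ _ fun a ha => h a ha b hb

/-- Fourier–Motzkin elimination of one direction. -/
lemma MyIsPoly.elim {S : Set V} (hS : MyIsPoly S) (v : V) :
    MyIsPoly {x | ∃ t : ℝ, x + t • v ∈ S} := by
  classical
  obtain ⟨T, rfl⟩ := hS
  set Z : Finset ((V →L[ℝ] ℝ) × ℝ) := T.filter (fun r => r.1 v = 0) with hZ
  set U : Finset ((V →L[ℝ] ℝ) × ℝ) := T.filter (fun r => 0 < r.1 v) with hU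
  set L : Finset ((V →L[ℝ] ℝ) × ℝ) := T.filter (fun r => r.1 v < 0) with hL
  refine ⟨Z ∪ (U ×ˢ L).image (fun pq =>
      ((pq.1.1 v) • pq.2.1 - (pq.2.1 v) • pq.1.1,
        pq.1.1 v * pq.2.2 - pq.2.1 v * pq.1.2)), ?_⟩
  have key : ∀ x : V,
      (∃ t : ℝ, ∀ r ∈ T, r.1 x + t * r.1 v ≤ r.2) ↔
      ((∀ r ∈ Z, r.1 x ≤ r.2) ∧
        ∀ p ∈ U, ∀ q ∈ L,
          p.1 v * q.1 x - q.1 v * p.1 x ≤ p.1 v * q.2 - q.1 v * p.2) := by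
    intro x
    constructor
    · rintro ⟨t, ht⟩
      constructor
      · intro r hr
        rw [hZ, Finset.mem_filter] at hr
        have := ht r hr.1
        rw [hr.2] at this; linarith
      · intro p hp q hq
        rw [hU, Finset.mem_filter] at hp
        rw [hL, Finset.mem_filter] at hq
        have h1 := ht p hp.1
        have h2 := ht q hq.1
        nlinarith [mul_le_mul_of_nonneg_left h1 (by linarith [hq.2] : (0:ℝ) ≤ -q.1 v),
          mul_le_mul_of_nonneg_left h2 (le_of_lt hp.2)]
    · rintro ⟨h0, hpair⟩
      have hcomp : ∀ q ∈ L, ∀ p ∈ U,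
          (q.2 - q.1 x) / q.1 v ≤ (p.2 - p.1 x) / p.1 v := by
        intro q hq p hp
        have hqv : q.1 v < 0 := (Finset.mem_filter.mp hq).2
        have hpv : 0 < p.1 v := (Finset.mem_filter.mp hp).2
        have hh := hpair p hp q hq
        rw [div_le_iff_of_neg hqv, div_mul_eq_mul_div, div_le_iff₀ hpv]
        nlinarith
      obtain ⟨t, htL, htU⟩ := exists_between_finsets L U
        (fun q => (q.2 - q.1 x) / q.1 v) (fun p => (p.2 - p.1 x) / p.1 v) hcomp
      refine ⟨t, fun r hr => ?_⟩
      rcases lt_trichotomy (r.1 v) 0 with hneg | hzero | hpos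
      · have hrL : r ∈ L := Finset.mem_filter.mpr ⟨hr, hneg⟩
        have := htL r hrL
        rw [div_le_iff_of_neg hneg] at this
        linarith
      · have := h0 r (Finset.mem_filter.mpr ⟨hr, hzero⟩)
        rw [hzero]; linarith
      · have hrU : r ∈ U := Finset.mem_filter.mpr ⟨hr, hpos⟩
        have := htU r hrU
        rw [le_div_iff₀ hpos] at this
        linarith
  ext x
  simp only [Set.mem_setOf_eq]
  rw [show (∃ t : ℝ, ∀ r ∈ T, r.1 (x + t • v) ≤ r.2) ↔
      (∃ t : ℝ, ∀ r ∈ T, r.1 x + t * r.1 v ≤ r.2) by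
    constructor <;> rintro ⟨t, ht⟩ <;> refine ⟨t, fun r hr => ?_⟩ <;>
      have := ht r hr <;> simpa [map_add, map_smul, smul_eq_mul] using this]
  rw [key x]
  constructor
  · rintro ⟨h0, hpair⟩ r hr
    rcases Finset.mem_union.mp hr with hrZ | hrI
    · exact h0 r hrZ
    · obtain ⟨pq, hpq, rfl⟩ := Finset.mem_image.mp hrI
      obtain ⟨hp, hq⟩ := Finset.mem_product.mp hpq
      have := hpair pq.1 hp pq.2 hq
      simpa [ContinuousLinearMap.sub_apply, ContinuousLinearMap.smul_apply,
        smul_eq_mul] using this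
  · intro h
    constructor
    · exact fun r hr => h r (Finset.mem_union_left _ hr)
    · intro p hp q hq
      have hmem : (p, q) ∈ U ×ˢ L := Finset.mem_product.mpr ⟨hp, hq⟩
      have := h _ (Finset.mem_union_right _ (Finset.mem_image_of_mem _ hmem))
      simpa [ContinuousLinearMap.sub_apply, ContinuousLinearMap.smul_apply,
        smul_eq_mul] using this

/-- Iterated Fourier–Motzkin elimination of finitely many directions. -/
lemma MyIsPoly.elimFin : ∀ (n : ℕ) (w : Fin n → V) {S : Set V}, MyIsPoly S →
    MyIsPoly {x | ∃ c : Fin n → ℝ, x + ∑ i, c i • w i ∈ S} := by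
  intro n
  induction n with
  | zero =>
    intro w S hS
    have : {x | ∃ c : Fin 0 → ℝ, x + ∑ i, c i • w i ∈ S} = S := by
      ext x; simp
    rwa [this]
  | succ n ih =>
    intro w S hS
    have htail := ih (fun i => w i.succ) hS
    have := htail.elim (w 0)
    have hset : {x | ∃ t : ℝ, x + t • w 0 ∈
        {y | ∃ c : Fin n → ℝ, y + ∑ i, c i • w i.succ ∈ S}} =
        {x | ∃ c : Fin (n + 1) → ℝ, x + ∑ i, c i • w i ∈ S} := by
      ext x
      simp only [Set.mem_setOf_eq]
      constructor
      · rintro ⟨t, c, hc⟩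
        refine ⟨Fin.cons t c, ?_⟩
        rw [Fin.sum_univ_succ]
        simpa [add_assoc] using hc
      · rintro ⟨c, hc⟩
        refine ⟨c 0, fun i => c i.succ, ?_⟩
        rw [Fin.sum_univ_succ] at hc
        simpa [add_assoc] using hc
    rwa [hset] at this

end FourierMotzkin

lemma myIsPoly_of_inner {N m : ℕ} (a : Fin m → EuclideanSpace ℝ (Fin N))
    (b : Fin m → ℝ) :
    MyIsPoly {x : EuclideanSpace ℝ (Fin N) | ∀ i, ⟪a i, x⟫ ≤ b i} := by
  classical
  refine ⟨Finset.univ.image (fun i => (innerSL ℝ (a i), b i)), ?_⟩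
  ext x
  constructor
  · intro hx r hr
    simp only [Finset.mem_image, Finset.mem_univ, true_and] at hr
    obtain ⟨i, rfl⟩ := hr
    simpa using hx i
  · intro hx i
    have := hx _ (Finset.mem_image_of_mem _ (Finset.mem_univ i))
    simpa using this

/-- Two nonempty closed convex polyhedra in `ℝ^N` at distance zero intersect. -/
theorem polyhedra_dist_zero_inter {N : ℕ}
    (P Q : Set (EuclideanSpace ℝ (Fin N)))
    (mP : ℕ) (aP : Fin mP → EuclideanSpace ℝ (Fin N)) (bP : Fin mP → ℝ)
    (hP : P = {x | ∀ i, ⟪aP i, x⟫ ≤ bP i})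
    (mQ : ℕ) (aQ : Fin mQ → EuclideanSpace ℝ (Fin N)) (bQ : Fin mQ → ℝ)
    (hQ : Q = {x | ∀ i, ⟪aQ i, x⟫ ≤ bQ i})
    (hPne : P.Nonempty) (hQne : Q.Nonempty)
    (hdist : sInf (Set.image2 dist P Q) = 0) :
    (P ∩ Q).Nonempty := by
  classical
  subst hP; subst hQ
  set P : Set (EuclideanSpace ℝ (Fin N)) := {x | ∀ i, ⟪aP i, x⟫ ≤ bP i} with hP
  set Q : Set (EuclideanSpace ℝ (Fin N)) := {x | ∀ i, ⟪aQ i, x⟫ ≤ bQ i} with hQ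
  have hPpoly : MyIsPoly P := myIsPoly_of_inner aP bP
  have hQpoly : MyIsPoly Q := myIsPoly_of_inner aQ bQ
  -- the polyhedron T = {(x, q) | x + q ∈ P, q ∈ Q} in (EuclideanSpace ℝ (Fin N)) × (EuclideanSpace ℝ (Fin N))
  set f1 : (EuclideanSpace ℝ (Fin N)) × (EuclideanSpace ℝ (Fin N)) →L[ℝ] (EuclideanSpace ℝ (Fin N)) :=
    ContinuousLinearMap.fst ℝ (EuclideanSpace ℝ (Fin N)) (EuclideanSpace ℝ (Fin N)) + ContinuousLinearMap.snd ℝ (EuclideanSpace ℝ (Fin N)) (EuclideanSpace ℝ (Fin N)) with hf1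
  set T : Set ((EuclideanSpace ℝ (Fin N)) × (EuclideanSpace ℝ (Fin N))) := (f1 ⁻¹' P) ∩ ((ContinuousLinearMap.snd ℝ (EuclideanSpace ℝ (Fin N)) (EuclideanSpace ℝ (Fin N))) ⁻¹' Q)
    with hT
  have hTpoly : MyIsPoly T :=
    (hPpoly.preimage f1).inter (hQpoly.preimage _)
  set w : Fin N → (EuclideanSpace ℝ (Fin N)) × (EuclideanSpace ℝ (Fin N)) := fun i => ((0 : (EuclideanSpace ℝ (Fin N))), EuclideanSpace.single i (1 : ℝ))
    with hw
  have hfull : MyIsPoly {z : (EuclideanSpace ℝ (Fin N)) × (EuclideanSpace ℝ (Fin N)) | ∃ c : Fin N → ℝ, z + ∑ i, c i • w i ∈ T} :=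
    MyIsPoly.elimFin N w hTpoly
  set D : Set (EuclideanSpace ℝ (Fin N)) :=
    (ContinuousLinearMap.inl ℝ (EuclideanSpace ℝ (Fin N)) (EuclideanSpace ℝ (Fin N))) ⁻¹'
      {z : (EuclideanSpace ℝ (Fin N)) × (EuclideanSpace ℝ (Fin N)) | ∃ c : Fin N → ℝ, z + ∑ i, c i • w i ∈ T} with hD
  have hDpoly : MyIsPoly D := hfull.preimage _
  have hDclosed : IsClosed D := hDpoly.isClosed
  -- sum of basis vectors
  have hsum : ∀ q : (EuclideanSpace ℝ (Fin N)), ∑ i, q i • EuclideanSpace.single i (1 : ℝ) = q := by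
    intro q
    have := (EuclideanSpace.basisFun (Fin N) ℝ).sum_repr q
    simpa [EuclideanSpace.basisFun_apply, EuclideanSpace.basisFun_repr] using this
  have hwsum : ∀ c : Fin N → ℝ,
      ∑ i, c i • w i = ((0 : (EuclideanSpace ℝ (Fin N))), (∑ i, c i • EuclideanSpace.single i (1 : ℝ) : (EuclideanSpace ℝ (Fin N)))) := by
    intro c
    rw [Prod.ext_iff]
    constructor
    · rw [Prod.fst_sum]; simp [hw]
    · rw [Prod.snd_sum]; simp [hw]
  -- characterization of D
  have hDmem : ∀ x : (EuclideanSpace ℝ (Fin N)), x ∈ D ↔ ∃ q : (EuclideanSpace ℝ (Fin N)), x + q ∈ P ∧ q ∈ Q := by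
    intro x
    simp only [hD, Set.mem_preimage, Set.mem_setOf_eq, ContinuousLinearMap.inl_apply]
    constructor
    · rintro ⟨c, hc⟩
      rw [hwsum c] at hc
      refine ⟨∑ i, c i • EuclideanSpace.single i (1 : ℝ), ?_, ?_⟩
      · have := hc.1
        simpa [hf1, Prod.mk_add_mk] using this
      · have := hc.2
        simpa [Prod.mk_add_mk] using this
    · rintro ⟨q, hq1, hq2⟩
      refine ⟨fun i => q i, ?_⟩
      rw [hwsum]
      rw [hsum q]
      constructor
      · simpa [hf1, Prod.mk_add_mk] using hq1
      · simpa [Prod.mk_add_mk] using hq2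
  -- 0 is in the closure of D
  have hne : (Set.image2 dist P Q).Nonempty := hPne.image2 hQne
  have hbdd : BddBelow (Set.image2 dist P Q) := by
    refine ⟨0, ?_⟩
    rintro d ⟨p, hp, q, hq, rfl⟩
    exact dist_nonneg
  have h0cl : (0 : (EuclideanSpace ℝ (Fin N))) ∈ closure D := by
    rw [Metric.mem_closure_iff]
    intro ε hε
    have : sInf (Set.image2 dist P Q) < ε := by rw [hdist]; exact hε
    obtain ⟨d, hd, hdlt⟩ := (csInf_lt_iff hbdd hne).mp this
    obtain ⟨p, hp, q, hq, rfl⟩ := hd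
    refine ⟨p - q, ?_, ?_⟩
    · rw [hDmem]
      exact ⟨q, by rwa [sub_add_cancel], hq⟩
    · rwa [dist_zero_left, ← dist_eq_norm]
  have h0 : (0 : (EuclideanSpace ℝ (Fin N))) ∈ D := hDclosed.closure_eq ▸ h0cl
  obtain ⟨q, hq1, hq2⟩ := (hDmem 0).mp h0
  rw [zero_add] at hq1
  exact ⟨q, hq1, hq2⟩
end

section
/- Let H ∈ ℝ^{M×N}, y ∈ ℝ^M, λ > 0, let X ⊂ ℝ^N be a closed convex polytope, and let ψ_c : ℝ → ℝ_{≥0} (c = 1,…,N_C) be continuous piecewise-polynomial functions with finitely many pieces. Then the problem min_{x∈X} (½‖Hx − y‖² + λ Σ_c ⟨1, ψ_c(B_c |W_c x|)⟩), where W_c ∈ ℝ^{N×N}, B_c ∈ ℝ_{≥0}^{N×N}, |·| is applied componentwise, and ψ_c is applied componentwise, admits a minimizer. -/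
open scoped RealInnerProductSpace
open Filter Polynomial Topology

namespace EMPPR

variable {M N NC : ℕ}

lemma le_of_forall_lt_inv (c μ : ℝ) (h : ∀ k : ℕ, c ≤ μ + 1 / (k + 1)) : c ≤ μ := by
  by_contra hc
  push_neg at hc
  obtain ⟨k, hk⟩ := exists_nat_one_div_lt (sub_pos.mpr hc)
  have := h k
  linarith

/-! ### the pieces of the objective -/

noncomputable def Hlin (H : Matrix (Fin M) (Fin N) ℝ) :
    EuclideanSpace ℝ (Fin N) →ₗ[ℝ] EuclideanSpace ℝ (Fin M) where
  toFun x := WithLp.toLp 2 (H.mulVec x)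
  map_add' x z := by simp [Matrix.mulVec_add]
  map_smul' s x := by simp [Matrix.mulVec_smul]

lemma continuous_Hlin (H : Matrix (Fin M) (Fin N) ℝ) : Continuous (Hlin H) :=
  (Hlin H).continuous_of_finiteDimensional

noncomputable def qfun (H : Matrix (Fin M) (Fin N) ℝ) (y : EuclideanSpace ℝ (Fin M))
    (x : EuclideanSpace ℝ (Fin N)) : ℝ := (1 / 2) * ‖Hlin H x - y‖ ^ 2

lemma qfun_nonneg (H : Matrix (Fin M) (Fin N) ℝ) (y : EuclideanSpace ℝ (Fin M)) (x) :
    0 ≤ qfun H y x := by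
  unfold qfun
  positivity

lemma continuous_qfun (H : Matrix (Fin M) (Fin N) ℝ) (y : EuclideanSpace ℝ (Fin M)) :
    Continuous (qfun H y) := by
  unfold qfun
  exact continuous_const.mul ((((continuous_Hlin H).sub continuous_const).norm).pow 2)

def gfun (W B : Fin NC → Matrix (Fin N) (Fin N) ℝ) (p : Fin NC × Fin N)
    (x : EuclideanSpace ℝ (Fin N)) : ℝ :=
  ∑ n, B p.1 p.2 n * |(W p.1).mulVec x n|

section gfacts

variable {W B : Fin NC → Matrix (Fin N) (Fin N) ℝ}

lemma gfun_nonneg (hB : ∀ c i j, 0 ≤ B c i j) (p : Fin NC × Fin N)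
    (x : EuclideanSpace ℝ (Fin N)) : 0 ≤ gfun W B p x :=
  Finset.sum_nonneg fun n _ => mul_nonneg (hB _ _ _) (abs_nonneg _)

lemma continuous_mulVec_apply (A : Matrix (Fin N) (Fin N) ℝ) (n : Fin N) :
    Continuous fun x : EuclideanSpace ℝ (Fin N) => A.mulVec x n := by
  simp only [Matrix.mulVec, dotProduct]
  exact continuous_finset_sum _ fun m _ =>
    continuous_const.mul (EuclideanSpace.proj m).continuous

lemma continuous_gfun (p : Fin NC × Fin N) : Continuous (gfun W B p) :=
  continuous_finset_sum _ fun n _ =>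
    continuous_const.mul ((continuous_mulVec_apply (W p.1) n).abs)

lemma gfun_smul (p : Fin NC × Fin N) {s : ℝ} (hs : 0 ≤ s)
    (x : EuclideanSpace ℝ (Fin N)) : gfun W B p (s • x) = s * gfun W B p x := by
  unfold gfun
  rw [Finset.mul_sum]
  refine Finset.sum_congr rfl fun n _ => ?_
  have : (W p.1).mulVec ((s • x : EuclideanSpace ℝ (Fin N))) n = s * (W p.1).mulVec x n := by
    rw [WithLp.ofLp_smul, Matrix.mulVec_smul]; rfl
  rw [this, abs_mul, abs_of_nonneg hs]; ring

lemma gfun_line (hB : ∀ c i j, 0 ≤ B c i j) (p : Fin NC × Fin N)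
    {d : EuclideanSpace ℝ (Fin N)} (hd : gfun W B p d = 0)
    (x : EuclideanSpace ℝ (Fin N)) (s : ℝ) :
    gfun W B p (x + s • d) = gfun W B p x := by
  have h0 : ∀ n ∈ Finset.univ, B p.1 p.2 n * |(W p.1).mulVec d n| = 0 :=
    (Finset.sum_eq_zero_iff_of_nonneg
      (fun n _ => mul_nonneg (hB _ _ _) (abs_nonneg _))).1 hd
  refine Finset.sum_congr rfl fun n _ => ?_
  have hWadd : (W p.1).mulVec ((x + s • d : EuclideanSpace ℝ (Fin N))) n
      = (W p.1).mulVec x n + s * (W p.1).mulVec d n := by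
    have : (x + s • d : EuclideanSpace ℝ (Fin N)) = (x : Fin N → ℝ) + s • (d : Fin N → ℝ) := rfl
    rw [this, Matrix.mulVec_add, Matrix.mulVec_smul]; rfl
  rcases mul_eq_zero.1 (h0 n (Finset.mem_univ n)) with h | h
  · rw [h, zero_mul, zero_mul]
  · rw [hWadd, abs_eq_zero.1 h, mul_zero, add_zero]

lemma gfun_lower (hB : ∀ c i j, 0 ≤ B c i j) (p : Fin NC × Fin N)
    (d x : EuclideanSpace ℝ (Fin N)) {s : ℝ} (hs : 0 ≤ s) :
    s * gfun W B p d - gfun W B p x ≤ gfun W B p (x + s • d) := by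
  unfold gfun
  rw [Finset.mul_sum, ← Finset.sum_sub_distrib]
  refine Finset.sum_le_sum fun n _ => ?_
  have hWadd : (W p.1).mulVec ((x + s • d : EuclideanSpace ℝ (Fin N))) n
      = (W p.1).mulVec x n + s * (W p.1).mulVec d n := by
    have : (x + s • d : EuclideanSpace ℝ (Fin N)) = (x : Fin N → ℝ) + s • (d : Fin N → ℝ) := rfl
    rw [this, Matrix.mulVec_add, Matrix.mulVec_smul]; rfl
  rw [hWadd]
  have habs : s * |(W p.1).mulVec d n| - |(W p.1).mulVec x n|
      ≤ |(W p.1).mulVec x n + s * (W p.1).mulVec d n| := by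
    have h1 : |s * (W p.1).mulVec d n| - |(W p.1).mulVec x n|
        ≤ |(W p.1).mulVec x n + s * (W p.1).mulVec d n| := by
      have := abs_add_le ((W p.1).mulVec x n + s * (W p.1).mulVec d n) (-(W p.1).mulVec x n)
      simp at this
      linarith [abs_neg ((W p.1).mulVec x n), abs_mul s ((W p.1).mulVec d n)]
    rwa [abs_mul, abs_of_nonneg hs] at h1
  nlinarith [hB p.1 p.2 n, abs_nonneg ((W p.1).mulVec x n),
    abs_nonneg ((W p.1).mulVec d n)]

end gfacts

noncomputable def Ffun (H : Matrix (Fin M) (Fin N) ℝ) (y : EuclideanSpace ℝ (Fin M))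
    (lam : ℝ) (W B : Fin NC → Matrix (Fin N) (Fin N) ℝ) (ψ : Fin NC → ℝ → ℝ)
    (S : Finset (Fin NC × Fin N)) (x : EuclideanSpace ℝ (Fin N)) : ℝ :=
  qfun H y x + lam * ∑ p ∈ S, ψ p.1 (gfun W B p x)

section Ffacts

variable (H : Matrix (Fin M) (Fin N) ℝ) (y : EuclideanSpace ℝ (Fin M)) (lam : ℝ)
  (W B : Fin NC → Matrix (Fin N) (Fin N) ℝ) (ψ : Fin NC → ℝ → ℝ)

lemma continuous_Ffun (hψcont : ∀ c, Continuous (ψ c)) (S : Finset (Fin NC × Fin N)) :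
    Continuous (Ffun H y lam W B ψ S) :=
  (continuous_qfun H y).add (continuous_const.mul (continuous_finset_sum _
    fun p _ => (hψcont p.1).comp (continuous_gfun p)))

lemma Ffun_nonneg (hlam : 0 ≤ lam) (hψnn : ∀ c t, 0 ≤ ψ c t)
    (S : Finset (Fin NC × Fin N)) (x : EuclideanSpace ℝ (Fin N)) :
    0 ≤ Ffun H y lam W B ψ S x :=
  add_nonneg (qfun_nonneg H y x) (mul_nonneg hlam
    (Finset.sum_nonneg fun p _ => hψnn p.1 _))

lemma lamsum_le_Ffun (S : Finset (Fin NC × Fin N)) (x : EuclideanSpace ℝ (Fin N)) :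
    lam * ∑ p ∈ S, ψ p.1 (gfun W B p x) ≤ Ffun H y lam W B ψ S x :=
  le_add_of_nonneg_left (qfun_nonneg H y x)

lemma qfun_le_Ffun (hlam : 0 ≤ lam) (hψnn : ∀ c t, 0 ≤ ψ c t)
    (S : Finset (Fin NC × Fin N)) (x : EuclideanSpace ℝ (Fin N)) :
    qfun H y x ≤ Ffun H y lam W B ψ S x :=
  le_add_of_nonneg_right (mul_nonneg hlam (Finset.sum_nonneg fun p _ => hψnn p.1 _))

end Ffacts

/-! ### slack counting -/

open scoped Classical in
noncomputable def slack {m : ℕ} (a : Fin m → EuclideanSpace ℝ (Fin N)) (b : Fin m → ℝ) :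
    Finset (Fin m) :=
  Finset.univ.filter fun i =>
    ∃ x : EuclideanSpace ℝ (Fin N), (∀ j, ⟪a j, x⟫ ≤ b j) ∧ ⟪a i, x⟫ < b i

lemma mem_newpoly {m : ℕ} (a : Fin m → EuclideanSpace ℝ (Fin N)) (b : Fin m → ℝ)
    (i : Fin m) (x : EuclideanSpace ℝ (Fin N)) :
    (∀ j, ⟪(Fin.snoc a (-a i) : Fin (m+1) → EuclideanSpace ℝ (Fin N)) j, x⟫
        ≤ (Fin.snoc b (-(b i)) : Fin (m+1) → ℝ) j)
      ↔ (∀ j, ⟪a j, x⟫ ≤ b j) ∧ ⟪a i, x⟫ = b i := by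
  constructor
  · intro h
    have h1 : ∀ j : Fin m, ⟪a j, x⟫ ≤ b j := by
      intro j
      have := h (Fin.castSucc j)
      rwa [Fin.snoc_castSucc, Fin.snoc_castSucc] at this
    have h2 := h (Fin.last m)
    rw [Fin.snoc_last, Fin.snoc_last, inner_neg_left] at h2
    exact ⟨h1, le_antisymm (h1 i) (by linarith)⟩
  · intro ⟨h1, h2⟩ j
    refine Fin.lastCases ?_ (fun j => ?_) j
    · rw [Fin.snoc_last, Fin.snoc_last, inner_neg_left, h2]
    · rw [Fin.snoc_castSucc, Fin.snoc_castSucc]; exact h1 j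

lemma slack_card_lt {m : ℕ} (a : Fin m → EuclideanSpace ℝ (Fin N)) (b : Fin m → ℝ)
    (i : Fin m) (hi : i ∈ slack a b) :
    (slack (Fin.snoc a (-a i) : Fin (m+1) → EuclideanSpace ℝ (Fin N))
      (Fin.snoc b (-(b i)))).card < (slack a b).card := by
  classical
  have hsub : slack (Fin.snoc a (-a i) : Fin (m+1) → EuclideanSpace ℝ (Fin N))
      (Fin.snoc b (-(b i)))
      ⊆ ((slack a b).erase i).map ⟨Fin.castSucc, Fin.castSucc_injective m⟩ := by
    intro j' hj'
    simp only [slack, Finset.mem_filter, Finset.mem_univ, true_and] at hj'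
    obtain ⟨x, hxP', hxlt⟩ := hj'
    have hx := (mem_newpoly a b i x).1 hxP'
    refine Fin.lastCases ?_ (fun j hj' => ?_) j' hxlt
    · intro hxlt
      rw [Fin.snoc_last, Fin.snoc_last, inner_neg_left] at hxlt
      linarith [hx.1 i, hx.2.ge]
    · rw [Fin.snoc_castSucc, Fin.snoc_castSucc] at hj'
      have hji : j ≠ i := by
        rintro rfl
        exact absurd hx.2 (ne_of_lt hj')
      simp only [Finset.mem_map, Function.Embedding.coeFn_mk]
      exact ⟨j, Finset.mem_erase.2 ⟨hji, by
        simp only [slack, Finset.mem_filter, Finset.mem_univ, true_and]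
        exact ⟨x, hx.1, hj'⟩⟩, rfl⟩
  calc (slack (Fin.snoc a (-a i) : Fin (m+1) → EuclideanSpace ℝ (Fin N))
      (Fin.snoc b (-(b i)))).card
      ≤ (((slack a b).erase i).map _).card := Finset.card_le_card hsub
    _ = ((slack a b).erase i).card := Finset.card_map _
    _ < (slack a b).card := Finset.card_erase_lt_of_mem hi

lemma isClosed_poly {m : ℕ} (a : Fin m → EuclideanSpace ℝ (Fin N)) (b : Fin m → ℝ) :
    IsClosed {x : EuclideanSpace ℝ (Fin N) | ∀ i, ⟪a i, x⟫ ≤ b i} := by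
  have : {x : EuclideanSpace ℝ (Fin N) | ∀ i, ⟪a i, x⟫ ≤ b i}
      = ⋂ i, {x | ⟪a i, x⟫ ≤ b i} := by ext x; simp
  rw [this]
  exact isClosed_iInter fun i =>
    isClosed_le (Continuous.inner continuous_const continuous_id) continuous_const

lemma exists_min_of_bounded (P : Set (EuclideanSpace ℝ (Fin N))) (hP : IsClosed P)
    (F : EuclideanSpace ℝ (Fin N) → ℝ) (hF : Continuous F) (μ R : ℝ)
    (hμ : ∀ z ∈ P, μ ≤ F z)
    (h : ∀ k : ℕ, ∃ x ∈ P, ‖x‖ ≤ R ∧ F x < μ + 1 / (k + 1)) :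
    ∃ xmin ∈ P, ∀ z ∈ P, F xmin ≤ F z := by
  set K := P ∩ Metric.closedBall 0 R with hK
  have hKc : IsCompact K :=
    ((isCompact_closedBall (0 : EuclideanSpace ℝ (Fin N)) R).inter_left hP)
  have hKne : K.Nonempty := by
    obtain ⟨x, hxP, hxR, -⟩ := h 0
    exact ⟨x, hxP, by simpa [Metric.mem_closedBall] using hxR⟩
  obtain ⟨x₀, hx₀K, hmin⟩ := hKc.exists_isMinOn hKne hF.continuousOn
  refine ⟨x₀, hx₀K.1, fun z hz => ?_⟩
  have hle : F x₀ ≤ μ := by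
    refine le_of_forall_lt_inv _ _ fun k => ?_
    obtain ⟨x, hxP, hxR, hxF⟩ := h k
    have : F x₀ ≤ F x := hmin ⟨hxP, by simpa [Metric.mem_closedBall] using hxR⟩
    linarith
  exact hle.trans (hμ z hz)

lemma psi_dichotomy (ψ : ℝ → ℝ) (hnn : ∀ t, 0 ≤ ψ t)
    (hpp : ∃ (L : ℕ) (I : Fin L → Set ℝ) (p : Fin L → Polynomial ℝ),
      (∀ j, (I j).OrdConnected) ∧ (⋃ j, I j) = Set.univ ∧
      ∀ j, ∀ t ∈ I j, ψ t = (p j).eval t) :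
    (∃ T, ∀ s, T ≤ s → ψ s = ψ T) ∨ Tendsto ψ atTop atTop := by
  obtain ⟨L, I, p, hord, hcov, heq⟩ := hpp
  have hmem : ∀ n : ℕ, ∃ j, (n : ℝ) ∈ I j := by
    intro n
    have : (n : ℝ) ∈ ⋃ j, I j := by rw [hcov]; trivial
    simpa using this
  choose jj hjj using hmem
  obtain ⟨j, hj⟩ := Finite.exists_infinite_fiber jj
  have hjinf : (jj ⁻¹' {j}).Infinite := Set.infinite_coe_iff.mp hj
  obtain ⟨n₀, hn₀⟩ := hjinf.nonempty
  have hn₀j : (n₀ : ℝ) ∈ I j := by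
    have := hjj n₀; rwa [show jj n₀ = j from hn₀] at this
  have hray : ∀ s : ℝ, (n₀ : ℝ) ≤ s → s ∈ I j := by
    intro s hs
    obtain ⟨m, hm, hms⟩ := hjinf.exists_gt ⌈s⌉₊
    have hsm : s ≤ (m : ℝ) :=
      le_trans (Nat.le_ceil s) (by exact_mod_cast hms.le)
    have hmj : (m : ℝ) ∈ I j := by
      have := hjj m; rwa [show jj m = j from hm] at this
    exact (hord j).out hn₀j hmj ⟨hs, hsm⟩
  have hev : ∀ s : ℝ, (n₀ : ℝ) ≤ s → ψ s = (p j).eval s :=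
    fun s hs => heq j s (hray s hs)
  rcases le_or_gt (p j).degree 0 with hdeg | hdeg
  · left
    obtain ⟨c, hc⟩ : ∃ c, p j = C c := ⟨_, (Polynomial.eq_C_of_degree_le_zero hdeg)⟩
    refine ⟨(n₀ : ℝ), fun s hs => ?_⟩
    rw [hev s hs, hev _ le_rfl, hc]; simp
  · rcases le_or_gt 0 (p j).leadingCoeff with hl | hl
    · right
      have hT := Polynomial.tendsto_atTop_of_leadingCoeff_nonneg (p j) hdeg hl
      refine hT.congr' ?_
      filter_upwards [eventually_ge_atTop (n₀ : ℝ)] with s hs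
      exact (hev s hs).symm
    · exfalso
      have hB := Polynomial.tendsto_atBot_of_leadingCoeff_nonpos (p j) hdeg hl.le
      have : ∀ᶠ s in (atTop : Filter ℝ), eval s (p j) < 0 :=
        hB.eventually (eventually_lt_atBot 0)
      obtain ⟨s, hs1, hs2⟩ :=
        (this.and (eventually_ge_atTop (n₀ : ℝ))).exists
      have := hnn s
      rw [hev s hs2] at this
      linarith

section MainInduction

variable (H : Matrix (Fin M) (Fin N) ℝ) (y : EuclideanSpace ℝ (Fin M))
  (lam : ℝ) (W B : Fin NC → Matrix (Fin N) (Fin N) ℝ) (ψ : Fin NC → ℝ → ℝ)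

set_option maxHeartbeats 2000000 in
lemma main_induction (hlam : 0 < lam)
    (hB : ∀ c i j, 0 ≤ B c i j)
    (hψcont : ∀ c, Continuous (ψ c)) (hψnn : ∀ c t, 0 ≤ ψ c t)
    (hdich : ∀ c, (∃ T, ∀ s, T ≤ s → ψ c s = ψ c T) ∨ Tendsto (ψ c) atTop atTop) :
    ∀ (n : ℕ) (S : Finset (Fin NC × Fin N)) (m : ℕ)
      (a : Fin m → EuclideanSpace ℝ (Fin N)) (b : Fin m → ℝ),
      S.card + (slack a b).card ≤ n →
      {x : EuclideanSpace ℝ (Fin N) | ∀ i, ⟪a i, x⟫ ≤ b i}.Nonempty →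
      ∃ xmin, (∀ i, ⟪a i, xmin⟫ ≤ b i) ∧
        ∀ z, (∀ i, ⟪a i, z⟫ ≤ b i) →
          Ffun H y lam W B ψ S xmin ≤ Ffun H y lam W B ψ S z := by
  intro n
  induction n using Nat.strong_induction_on with
  | _ n IH =>
  intro S m a b hcard hne
  classical
  set P := {x : EuclideanSpace ℝ (Fin N) | ∀ i, ⟪a i, x⟫ ≤ b i} with hPdef
  set F := Ffun H y lam W B ψ S with hFdef
  have hFc : Continuous F := continuous_Ffun H y lam W B ψ hψcont S
  have hFnn : ∀ x, 0 ≤ F x := Ffun_nonneg H y lam W B ψ hlam.le hψnn S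
  have hPim : (F '' P).Nonempty := hne.image F
  have hbdd : BddBelow (F '' P) := ⟨0, by rintro v ⟨x, -, rfl⟩; exact hFnn x⟩
  set μ := sInf (F '' P) with hμdef
  have hμle : ∀ z ∈ P, μ ≤ F z := fun z hz => csInf_le hbdd ⟨z, hz, rfl⟩
  have hμnn : 0 ≤ μ := le_csInf hPim (by rintro v ⟨x, -, rfl⟩; exact hFnn x)
  have hμex : ∀ ε : ℝ, 0 < ε → ∃ x ∈ P, F x < μ + ε := by
    intro ε hε
    obtain ⟨v, ⟨x, hxP, rfl⟩, hv⟩ :=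
      exists_lt_of_csInf_lt hPim (lt_add_of_pos_right μ hε)
    exact ⟨x, hxP, hv⟩
  by_cases hbdcase : ∃ R, ∀ k : ℕ, ∃ x ∈ P, ‖x‖ ≤ R ∧ F x < μ + 1 / (k + 1)
  · obtain ⟨R, hR⟩ := hbdcase
    obtain ⟨xm, h1, h2⟩ := exists_min_of_bounded P (isClosed_poly a b) F hFc μ R hμle hR
    exact ⟨xm, h1, h2⟩
  -- unbounded case : build a norm-near-minimal minimizing sequence
  push_neg at hbdcase
  have hub : ∀ R : ℝ, ∃ k : ℕ, ∀ x ∈ P, F x < μ + 1 / (k + 1) → R < ‖x‖ := by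
    intro R
    obtain ⟨k, hk⟩ := hbdcase R
    refine ⟨k, fun x hx hF => ?_⟩
    by_contra hc
    push_neg at hc
    exact absurd hF (not_lt.2 (hk x hx hc))
  choose kk hkk using hub
  set ε : ℕ → ℝ := fun j => 1 / ((max (kk (j : ℝ)) j : ℕ) + 1) with hεdef
  have hεpos : ∀ j, 0 < ε j := fun j => by positivity
  have hεk : ∀ j : ℕ, ε j ≤ 1 / ((kk (j : ℝ) : ℝ) + 1) := by
    intro j
    apply one_div_le_one_div_of_le (by positivity)
    have : (kk (j:ℝ) : ℝ) ≤ ((max (kk (j:ℝ)) j : ℕ) : ℝ) := by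
      exact_mod_cast le_max_left _ _
    linarith
  have hεj : ∀ j : ℕ, ε j ≤ 1 / ((j : ℝ) + 1) := by
    intro j
    apply one_div_le_one_div_of_le (by positivity)
    have : (j : ℝ) ≤ ((max (kk (j:ℝ)) j : ℕ) : ℝ) := by
      exact_mod_cast le_max_right _ _
    linarith
  have hsel : ∀ j : ℕ, ∃ x, (x ∈ P ∧ F x < μ + ε j) ∧
      ∀ z ∈ P, F z < μ + ε j → ‖x‖ < ‖z‖ + 1 / ((j:ℝ) + 1) := by
    intro j
    have hAne : {x | x ∈ P ∧ F x < μ + ε j}.Nonempty := by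
      obtain ⟨x, hx1, hx2⟩ := hμex (ε j) (hεpos j)
      exact ⟨x, hx1, hx2⟩
    have himne : ((fun x : EuclideanSpace ℝ (Fin N) => ‖x‖) ''
        {x | x ∈ P ∧ F x < μ + ε j}).Nonempty := hAne.image _
    have hbd : BddBelow ((fun x : EuclideanSpace ℝ (Fin N) => ‖x‖) ''
        {x | x ∈ P ∧ F x < μ + ε j}) :=
      ⟨0, by rintro v ⟨x, -, rfl⟩; exact norm_nonneg x⟩
    obtain ⟨v, ⟨x, hxA, rfl⟩, hv⟩ := exists_lt_of_csInf_lt himne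
      (lt_add_of_pos_right _ (by positivity : (0:ℝ) < 1 / ((j:ℝ) + 1)))
    refine ⟨x, hxA, fun z hz hFz => ?_⟩
    have hinf := csInf_le hbd ⟨z, ⟨hz, hFz⟩, rfl⟩
    linarith
  choose yy hyA hymin using hsel
  have hyP : ∀ j, yy j ∈ P := fun j => (hyA j).1
  have hyF : ∀ j, F (yy j) < μ + ε j := fun j => (hyA j).2
  have hyFj : ∀ j : ℕ, F (yy j) < μ + 1 / ((j:ℝ) + 1) :=
    fun j => lt_of_lt_of_le (hyF j) (by linarith [hεj j])
  have hynorm : ∀ j : ℕ, (j : ℝ) < ‖yy j‖ := fun j =>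
    hkk (j : ℝ) (yy j) (hyP j) (lt_of_lt_of_le (hyF j) (by linarith [hεk j]))
  have hypos : ∀ j, 0 < ‖yy j‖ :=
    fun j => lt_of_le_of_lt (Nat.cast_nonneg j) (hynorm j)
  set u : ℕ → EuclideanSpace ℝ (Fin N) := fun j => (‖yy j‖)⁻¹ • yy j with hu
  have humem : ∀ j, u j ∈ Metric.sphere (0 : EuclideanSpace ℝ (Fin N)) 1 := by
    intro j
    rw [mem_sphere_zero_iff_norm, norm_smul, norm_inv, norm_norm,
      inv_mul_cancel₀ (ne_of_gt (hypos j))]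
  obtain ⟨d, hdmem, φ, hφmono, hφtend⟩ :=
    (isCompact_sphere (0 : EuclideanSpace ℝ (Fin N)) 1).tendsto_subseq humem
  have hd1 : ‖d‖ = 1 := mem_sphere_zero_iff_norm.1 hdmem
  set w : ℕ → EuclideanSpace ℝ (Fin N) := fun j => yy (φ j) with hwdef
  set v : ℕ → EuclideanSpace ℝ (Fin N) := fun j => u (φ j) with hvdef
  have hvtend : Tendsto v atTop (𝓝 d) := hφtend
  have hwP : ∀ j, w j ∈ P := fun j => hyP (φ j)
  have hwpos : ∀ j, 0 < ‖w j‖ := fun j => hypos (φ j)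
  have hφge : ∀ j : ℕ, j ≤ φ j := fun j => hφmono.le_apply
  have hvw : ∀ j, v j = (‖w j‖)⁻¹ • w j := fun j => rfl
  have hwv : ∀ j, w j = ‖w j‖ • v j := by
    intro j
    rw [hvw j, smul_smul, mul_inv_cancel₀ (ne_of_gt (hwpos j)), one_smul]
  have hwnorm_tend : Tendsto (fun j => ‖w j‖) atTop atTop := by
    apply tendsto_atTop_mono (fun j => (hynorm (φ j)).le.trans' ?_)
      tendsto_natCast_atTop_atTop
    exact_mod_cast hφge j
  have hwF : ∀ j : ℕ, F (w j) < μ + 1 / ((j:ℝ) + 1) := by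
    intro j
    refine lt_of_lt_of_le (hyFj (φ j)) ?_
    have h2 : (1 : ℝ) / ((φ j : ℝ) + 1) ≤ 1 / ((j:ℝ)+1) := by
      apply one_div_le_one_div_of_le (by positivity)
      have : (j : ℝ) ≤ (φ j : ℝ) := by exact_mod_cast hφge j
      linarith
    linarith
  have hwinv_tend : Tendsto (fun j => ‖w j‖⁻¹) atTop (𝓝 0) :=
    tendsto_inv_atTop_zero.comp hwnorm_tend
  -- R1 : d is a recession direction of P
  have hR1 : ∀ i, ⟪a i, d⟫ ≤ 0 := by
    intro i
    have h1 : Tendsto (fun j => ⟪a i, v j⟫) atTop (𝓝 ⟪a i, d⟫) :=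
      ((Continuous.inner continuous_const continuous_id).tendsto d).comp hvtend
    have h2 : Tendsto (fun j => b i * ‖w j‖⁻¹) atTop (𝓝 0) := by
      simpa using tendsto_const_nhds.mul hwinv_tend
    refine le_of_tendsto_of_tendsto' h1 h2 fun j => ?_
    rw [hvw j, real_inner_smul_right]
    have := hwP j i
    have hinv : (0:ℝ) ≤ ‖w j‖⁻¹ := inv_nonneg.2 (norm_nonneg _)
    calc ‖w j‖⁻¹ * ⟪a i, w j⟫ ≤ ‖w j‖⁻¹ * b i := by
          exact mul_le_mul_of_nonneg_left this hinv
      _ = b i * ‖w j‖⁻¹ := mul_comm _ _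
  -- R2 : H d = 0
  have hR2 : Hlin H d = 0 := by
    have hq : ∀ j, ‖Hlin H (w j) - y‖ ≤ Real.sqrt (2*(μ+1)) := by
      intro j
      have hqF := qfun_le_Ffun H y lam W B ψ hlam.le hψnn S (w j)
      have : (1/2) * ‖Hlin H (w j) - y‖^2 < μ + 1 := by
        have := hwF j
        have h1 : (1:ℝ)/((j:ℝ)+1) ≤ 1 := by
          rw [div_le_one (by positivity)]; linarith [Nat.cast_nonneg (α := ℝ) j]
        unfold F at this
        unfold qfun at hqF
        linarith
      rw [show (2:ℝ)*(μ+1) = (2*(μ+1)) from rfl, ← Real.sqrt_sq (norm_nonneg (Hlin H (w j) - y))]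
      apply Real.sqrt_le_sqrt
      linarith
    have hHb : ∀ j, ‖Hlin H (w j)‖ ≤ ‖y‖ + Real.sqrt (2*(μ+1)) := by
      intro j
      calc ‖Hlin H (w j)‖ = ‖(Hlin H (w j) - y) + y‖ := by rw [sub_add_cancel]
        _ ≤ ‖Hlin H (w j) - y‖ + ‖y‖ := norm_add_le _ _
        _ ≤ Real.sqrt (2*(μ+1)) + ‖y‖ := by linarith [hq j]
        _ = ‖y‖ + Real.sqrt (2*(μ+1)) := by ring
    have hHv : ∀ j, ‖Hlin H (v j)‖ = ‖w j‖⁻¹ * ‖Hlin H (w j)‖ := by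
      intro j
      rw [hvw j, map_smul, norm_smul, norm_inv, norm_norm]
    have h0 : Tendsto (fun j => ‖Hlin H (v j)‖) atTop (𝓝 0) := by
      apply squeeze_zero (fun j => norm_nonneg _)
        (g := fun j => (‖y‖ + Real.sqrt (2*(μ+1))) * ‖w j‖⁻¹)
      · intro j
        rw [hHv j, mul_comm]
        exact mul_le_mul_of_nonneg_right (hHb j) (inv_nonneg.2 (norm_nonneg _))
      · simpa using tendsto_const_nhds.mul hwinv_tend
    have hlim : Tendsto (fun j => Hlin H (v j)) atTop (𝓝 (Hlin H d)) :=
      ((continuous_Hlin H).tendsto d).comp hvtend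
    have h0' : Tendsto (fun j => Hlin H (v j)) atTop (𝓝 0) :=
      tendsto_zero_iff_norm_tendsto_zero.2 h0
    exact tendsto_nhds_unique hlim h0'
  -- inner products with d along the sequence
  have hvd : Tendsto (fun j => ⟪v j, d⟫) atTop (𝓝 1) := by
    have h1 : Tendsto (fun j => ⟪v j, d⟫) atTop (𝓝 ⟪d, d⟫) :=
      ((Continuous.inner continuous_id continuous_const).tendsto d).comp hvtend
    rwa [real_inner_self_eq_norm_mul_norm, hd1, one_mul] at h1
  have hwd : ∀ j, ⟪w j, d⟫ = ‖w j‖ * ⟪v j, d⟫ := by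
    intro j
    nth_rewrite 1 [hwv j]
    rw [real_inner_smul_left]
  have hwdtop : Tendsto (fun j => ⟪w j, d⟫) atTop atTop := by
    have := hwnorm_tend.atTop_mul_pos one_pos hvd
    exact this.congr fun j => (hwd j).symm
  have hgv : ∀ p : Fin NC × Fin N,
      Tendsto (fun j => gfun W B p (v j)) atTop (𝓝 (gfun W B p d)) :=
    fun p => ((continuous_gfun p).tendsto d).comp hvtend
  by_cases hCA : ∃ p ∈ S, 0 < gfun W B p d
  · -- CASE A: some regularizer escapes to +∞ along d
    obtain ⟨p₀, hp₀S, hp₀⟩ := hCA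
    set SA := S.filter (fun p => 0 < gfun W B p d) with hSAdef
    set S' := S.filter (fun p => ¬ 0 < gfun W B p d) with hS'def
    have hp₀SA : p₀ ∈ SA := Finset.mem_filter.2 ⟨hp₀S, hp₀⟩
    have hS'card : S'.card < S.card := by
      apply Finset.card_lt_card
      rw [Finset.ssubset_iff_of_subset (Finset.filter_subset _ _)]
      exact ⟨p₀, hp₀S, by simp [hS'def, hp₀]⟩
    have hgtop : ∀ p ∈ SA, Tendsto (fun j => gfun W B p (w j)) atTop atTop := by
      intro p hp
      have hpd : 0 < gfun W B p d := (Finset.mem_filter.1 hp).2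
      have heq : ∀ j, gfun W B p (w j) = ‖w j‖ * gfun W B p (v j) := by
        intro j
        nth_rewrite 1 [hwv j]
        exact gfun_smul p (norm_nonneg _) (v j)
      exact (hwnorm_tend.atTop_mul_pos hpd (hgv p)).congr (fun j => (heq j).symm)
    have hQ : ∀ p ∈ SA, ∃ T, ∀ s, T ≤ s → ψ p.1 s = ψ p.1 T := by
      intro p hp
      rcases hdich p.1 with h | h
      · exact h
      · exfalso
        have h1 : Tendsto (fun j => ψ p.1 (gfun W B p (w j))) atTop atTop :=
          h.comp (hgtop p hp)
        have h2 : ∀ j : ℕ, ψ p.1 (gfun W B p (w j)) ≤ (μ + 1)/lam := by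
          intro j
          have hsingle : ψ p.1 (gfun W B p (w j))
              ≤ ∑ q ∈ S, ψ q.1 (gfun W B q (w j)) :=
            Finset.single_le_sum (f := fun q => ψ q.1 (gfun W B q (w j)))
              (fun q _ => hψnn q.1 _) ((Finset.mem_filter.1 hp).1)
          have hlamsum := lamsum_le_Ffun H y lam W B ψ S (w j)
          have hF1 : F (w j) < μ + 1 := lt_of_lt_of_le (hwF j) (by
            have h3 : (1:ℝ)/((j:ℝ)+1) ≤ 1 := by
              rw [div_le_one (by positivity)]
              linarith [Nat.cast_nonneg (α := ℝ) j]
            linarith)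
          rw [le_div_iff₀ hlam]
          calc ψ p.1 (gfun W B p (w j)) * lam
              = lam * ψ p.1 (gfun W B p (w j)) := mul_comm _ _
            _ ≤ lam * ∑ q ∈ S, ψ q.1 (gfun W B q (w j)) :=
                mul_le_mul_of_nonneg_left hsingle hlam.le
            _ ≤ F (w j) := hlamsum
            _ ≤ μ + 1 := hF1.le
        obtain ⟨j, hj⟩ := (h1.eventually (eventually_gt_atTop ((μ+1)/lam))).exists
        exact absurd (h2 j) (not_le.2 hj)
    have hTex : ∀ p : Fin NC × Fin N, ∃ T : ℝ,
        p ∈ SA → ∀ s, T ≤ s → ψ p.1 s = ψ p.1 T := by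
      intro p
      by_cases hp : p ∈ SA
      · obtain ⟨T, hT⟩ := hQ p hp
        exact ⟨T, fun _ => hT⟩
      · exact ⟨0, fun h => absurd h hp⟩
    choose Tc hTc using hTex
    obtain ⟨xs, hxsP, hxsmin⟩ := IH (S'.card + (slack a b).card)
      (lt_of_lt_of_le (Nat.add_lt_add_right hS'card _) hcard) S' m a b le_rfl hne
    have hSAne : SA.Nonempty := ⟨p₀, hp₀SA⟩
    set t₀ : ℝ := max 0 (SA.sup' hSAne
      (fun p => (Tc p + gfun W B p xs) / gfun W B p d)) with ht₀def
    have ht₀0 : (0:ℝ) ≤ t₀ := le_max_left _ _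
    have ht₀p : ∀ p ∈ SA, Tc p ≤ gfun W B p (xs + t₀ • d) := by
      intro p hp
      have hpd : 0 < gfun W B p d := (Finset.mem_filter.1 hp).2
      have h1 : (Tc p + gfun W B p xs) / gfun W B p d ≤ t₀ :=
        le_trans (Finset.le_sup'
          (fun p => (Tc p + gfun W B p xs) / gfun W B p d) hp) (le_max_right _ _)
      have h2 : Tc p + gfun W B p xs ≤ t₀ * gfun W B p d := by
        rwa [div_le_iff₀ hpd] at h1
      have h3 := gfun_lower (W := W) hB p d xs ht₀0
      linarith
    have hxfinP : ∀ i, ⟪a i, xs + t₀ • d⟫ ≤ b i := by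
      intro i
      rw [inner_add_right, real_inner_smul_right]
      have h1 := hR1 i
      have h2 := hxsP i
      nlinarith
    have hsplit : ∀ x : EuclideanSpace ℝ (Fin N),
        F x = Ffun H y lam W B ψ S' x + lam * ∑ p ∈ SA, ψ p.1 (gfun W B p x) := by
      intro x
      rw [hFdef]
      unfold Ffun
      rw [← Finset.sum_filter_add_sum_filter_not S (fun p => 0 < gfun W B p d)
        (fun p => ψ p.1 (gfun W B p x))]
      rw [← hSAdef, ← hS'def]
      ring
    have hplateau : F (xs + t₀ • d)
        = Ffun H y lam W B ψ S' xs + lam * ∑ p ∈ SA, ψ p.1 (Tc p) := by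
      rw [hsplit]
      have e1 : Ffun H y lam W B ψ S' (xs + t₀ • d) = Ffun H y lam W B ψ S' xs := by
        unfold Ffun
        have eq : qfun H y (xs + t₀ • d) = qfun H y xs := by
          unfold qfun
          rw [map_add, map_smul, hR2, smul_zero, add_zero]
        rw [eq]
        congr 1
        rw [Finset.mul_sum, Finset.mul_sum]
        apply Finset.sum_congr rfl
        intro p hp
        have hpd : gfun W B p d = 0 := by
          have h1 := (Finset.mem_filter.1 hp).2
          have h2 := gfun_nonneg (W := W) hB p d
          push_neg at h1
          linarith
        rw [gfun_line (W := W) hB p hpd xs t₀]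
      have e2 : ∑ p ∈ SA, ψ p.1 (gfun W B p (xs + t₀ • d))
          = ∑ p ∈ SA, ψ p.1 (Tc p) := by
        apply Finset.sum_congr rfl
        intro p hp
        exact hTc p hp _ (ht₀p p hp)
      rw [e1, e2]
    have hevent : ∀ᶠ j in atTop, ∀ p ∈ SA, Tc p ≤ gfun W B p (w j) := by
      rw [eventually_all_finset]
      intro p hp
      exact (hgtop p hp).eventually (eventually_ge_atTop (Tc p))
    have hle : F (xs + t₀ • d) ≤ μ := by
      refine le_of_forall_lt_inv _ _ fun k => ?_
      obtain ⟨j, hj1, hj2⟩ := (hevent.and (eventually_ge_atTop k)).exists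
      have hFw : F (w j) = Ffun H y lam W B ψ S' (w j)
          + lam * ∑ p ∈ SA, ψ p.1 (Tc p) := by
        rw [hsplit]
        congr 2
        apply Finset.sum_congr rfl
        intro p hp
        exact hTc p hp _ (hj1 p hp)
      have hstep : F (xs + t₀ • d) ≤ F (w j) := by
        rw [hplateau, hFw]
        have := hxsmin (w j) (hwP j)
        linarith
      have hjk : (1:ℝ)/((j:ℝ)+1) ≤ 1/((k:ℝ)+1) := by
        apply one_div_le_one_div_of_le (by positivity)
        have : (k:ℝ) ≤ (j:ℝ) := by exact_mod_cast hj2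
        linarith
      linarith [hwF j]
    exact ⟨xs + t₀ • d, hxfinP, fun z hz => le_trans (le_trans hle (hμle z hz)) le_rfl⟩
  · -- CASE B : the objective is invariant along the line through d
    have hgd0 : ∀ p ∈ S, gfun W B p d = 0 := by
      intro p hp
      push_neg at hCA
      exact le_antisymm (hCA p hp) (gfun_nonneg (W := W) hB p d)
    have hFinv : ∀ (x : EuclideanSpace ℝ (Fin N)) (s : ℝ), F (x + s • d) = F x := by
      intro x s
      rw [hFdef]
      unfold Ffun
      have eq : qfun H y (x + s • d) = qfun H y x := by
        unfold qfun
        rw [map_add, map_smul, hR2, smul_zero, add_zero]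
      rw [eq]
      congr 1
      congr 1
      apply Finset.sum_congr rfl
      intro p hp
      rw [gfun_line (W := W) hB p (hgd0 p hp) x s]
    have hFinv' : ∀ (x : EuclideanSpace ℝ (Fin N)) (s : ℝ), F (x - s • d) = F x := by
      intro x s
      have := hFinv x (-s)
      rwa [neg_smul, ← sub_eq_add_neg] at this
    set Aneg := Finset.univ.filter (fun i : Fin m => ⟪a i, d⟫ < 0) with hAnegdef
    have hτnn : ∀ i ∈ Aneg, ∀ j : ℕ, 0 ≤ (b i - ⟪a i, w j⟫) / (-⟪a i, d⟫) := by
      intro i hi j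
      have h1 : ⟪a i, d⟫ < 0 := (Finset.mem_filter.1 hi).2
      apply div_nonneg
      · linarith [hwP j i]
      · linarith
    have hmemback : ∀ j : ℕ, ∀ t : ℝ, 0 ≤ t →
        (∀ i ∈ Aneg, t ≤ (b i - ⟪a i, w j⟫) / (-⟪a i, d⟫)) →
        ∀ i, ⟪a i, w j - t • d⟫ ≤ b i := by
      intro j t ht htτ i
      rw [inner_sub_right, real_inner_smul_right]
      by_cases hi : ⟪a i, d⟫ < 0
      · have h1 : t ≤ (b i - ⟪a i, w j⟫) / (-⟪a i, d⟫) :=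
          htτ i (Finset.mem_filter.2 ⟨Finset.mem_univ i, hi⟩)
        have hpos : (0:ℝ) < -⟪a i, d⟫ := by linarith
        have h2 : t * (-⟪a i, d⟫) ≤ b i - ⟪a i, w j⟫ := (le_div_iff₀ hpos).1 h1
        linarith
      · push_neg at hi
        have h2 := mul_nonneg ht hi
        linarith [hwP j i]
    have hdrop : ∀ j : ℕ, ∀ t : ℝ, 0 ≤ t → t ≤ ⟪w j, d⟫ →
        (∀ i, ⟪a i, w j - t • d⟫ ≤ b i) →
        t * ⟪w j, d⟫ ≤ (1/((j:ℝ)+1)) * (2 * ‖w j‖) := by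
      intro j t ht htwd hmem
      have hFeq : F (w j - t • d) = F (w j) := hFinv' (w j) t
      have hnear : ‖w j‖ < ‖w j - t • d‖ + 1/((φ j : ℝ)+1) := by
        apply hymin (φ j) _ hmem
        rw [hFeq]
        exact hyF (φ j)
      have hexp : ‖w j - t • d‖^2 = ‖w j‖^2 - 2*(t*⟪w j, d⟫) + t^2 := by
        rw [norm_sub_sq_real, real_inner_smul_right, norm_smul, hd1, Real.norm_eq_abs]
        rw [mul_one, sq_abs]
      have hwn : ‖w j - t • d‖ ≤ ‖w j‖ := by
        nlinarith [norm_nonneg (w j - t • d), norm_nonneg (w j),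
          mul_nonneg ht (sub_nonneg.2 htwd)]
      have hφj' : (1:ℝ)/((φ j:ℝ)+1) ≤ 1/((j:ℝ)+1) := by
        apply one_div_le_one_div_of_le (by positivity)
        have : (j:ℝ) ≤ (φ j : ℝ) := by exact_mod_cast hφge j
        linarith
      have hsq : t * ⟪w j, d⟫ ≤ ‖w j‖^2 - ‖w j - t • d‖^2 := by
        nlinarith [mul_nonneg ht (sub_nonneg.2 htwd)]
      have e1 : ‖w j‖ - ‖w j - t • d‖ ≤ 1/((j:ℝ)+1) := by linarith
      have e2 : ‖w j‖^2 - ‖w j - t • d‖^2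
          = (‖w j‖ - ‖w j - t • d‖) * (‖w j‖ + ‖w j - t • d‖) := by ring
      have e3 : (‖w j‖ - ‖w j - t • d‖) * (‖w j‖ + ‖w j - t • d‖)
          ≤ (1/((j:ℝ)+1)) * (‖w j‖ + ‖w j - t • d‖) :=
        mul_le_mul_of_nonneg_right e1
          (add_nonneg (norm_nonneg _) (norm_nonneg _))
      have e4 : (1/((j:ℝ)+1)) * (‖w j‖ + ‖w j - t • d‖)
          ≤ (1/((j:ℝ)+1)) * (2 * ‖w j‖) := by
        apply mul_le_mul_of_nonneg_left (by linarith) (by positivity)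
      linarith
    have hhalf : ∀ᶠ j in atTop, ‖w j‖/2 ≤ ⟪w j, d⟫ := by
      have h1 : ∀ᶠ j in atTop, (1:ℝ)/2 ≤ ⟪v j, d⟫ :=
        hvd.eventually (eventually_ge_nhds (by norm_num : (1:ℝ)/2 < 1))
      filter_upwards [h1] with j hj
      rw [hwd j]
      have := (hwpos j).le
      nlinarith
    by_cases hAne : Aneg.Nonempty
    · -- the real case : recurse on a smaller polyhedron
      set t : ℕ → ℝ := fun j => min ⟪w j, d⟫
        (Aneg.inf' hAne (fun i => (b i - ⟪a i, w j⟫) / (-⟪a i, d⟫))) with htdef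
      -- the eventual situation
      have hQall : ∀ᶠ j in atTop, ∃ i ∈ Aneg,
          (∀ i', ⟪a i', w j - t j • d⟫ ≤ b i') ∧
          ⟪a i, w j - t j • d⟫ = b i ∧
          F (w j - t j • d) < μ + 1/((j:ℝ)+1) := by
        filter_upwards [hhalf, hwdtop.eventually (eventually_ge_atTop 5),
          hwdtop.eventually (eventually_gt_atTop 4)] with j hj1 hj2 hj3
        have htnn : 0 ≤ t j := by
          apply le_min (by linarith)
          apply Finset.le_inf'
          intro i hi
          exact hτnn i hi j
        have htle : ∀ i ∈ Aneg, t j ≤ (b i - ⟪a i, w j⟫) / (-⟪a i, d⟫) := by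
          intro i hi
          exact le_trans (min_le_right _ _) (Finset.inf'_le _ hi)
        have htwd : t j ≤ ⟪w j, d⟫ := min_le_left _ _
        have hmem : ∀ i', ⟪a i', w j - t j • d⟫ ≤ b i' :=
          hmemback j (t j) htnn htle
        have hdropj := hdrop j (t j) htnn htwd hmem
        have ht4 : t j ≤ 4 := by
          have h5 : (1:ℝ)/((j:ℝ)+1) ≤ 1 := by
            rw [div_le_one (by positivity)]
            linarith [Nat.cast_nonneg (α := ℝ) j]
          have h6 : t j * (‖w j‖/2) ≤ t j * ⟪w j, d⟫ :=
            mul_le_mul_of_nonneg_left hj1 htnn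
          have h7 : (1/((j:ℝ)+1)) * (2 * ‖w j‖) ≤ 2 * ‖w j‖ := by
            nlinarith [(hwpos j).le]
          have h8 := hwpos j
          nlinarith
        have hlt : t j < ⟪w j, d⟫ := lt_of_le_of_lt ht4 hj3
        have hteq : t j = Aneg.inf' hAne
            (fun i => (b i - ⟪a i, w j⟫) / (-⟪a i, d⟫)) := by
          rcases min_cases ⟪w j, d⟫ (Aneg.inf' hAne
            (fun i => (b i - ⟪a i, w j⟫) / (-⟪a i, d⟫))) with ⟨h, -⟩ | ⟨h, -⟩
          · exact absurd (show t j = ⟪w j, d⟫ from h) (ne_of_lt hlt)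
          · exact h
        obtain ⟨i, hi, hieq⟩ := Finset.exists_mem_eq_inf' hAne
          (fun i => (b i - ⟪a i, w j⟫) / (-⟪a i, d⟫))
        refine ⟨i, hi, hmem, ?_, ?_⟩
        · -- activity of constraint i
          have hid : ⟪a i, d⟫ < 0 := (Finset.mem_filter.1 hi).2
          have hne0 : -⟪a i, d⟫ ≠ 0 := by linarith
          have hcanc : (b i - ⟪a i, w j⟫) / (-⟪a i, d⟫) * ⟪a i, d⟫
              = -(b i - ⟪a i, w j⟫) := by
            rw [div_mul_eq_mul_div, div_eq_iff hne0]
            ring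
          rw [inner_sub_right, real_inner_smul_right, hteq.trans hieq, hcanc]
          ring
        · rw [hFinv' (w j) (t j)]
          exact hwF j
      -- pigeonhole a single active constraint occurring infinitely often
      have hfreq : ∃ i ∈ Aneg, ∃ᶠ j in atTop,
          (∀ i', ⟪a i', w j - t j • d⟫ ≤ b i') ∧
          ⟪a i, w j - t j • d⟫ = b i ∧
          F (w j - t j • d) < μ + 1/((j:ℝ)+1) := by
        by_contra hcon
        push_neg at hcon
        have hev : ∀ᶠ j in atTop, ∀ i ∈ Aneg,
            ¬((∀ i', ⟪a i', w j - t j • d⟫ ≤ b i') ∧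
              ⟪a i, w j - t j • d⟫ = b i ∧
              F (w j - t j • d) < μ + 1/((j:ℝ)+1)) :=
          (eventually_all_finset Aneg).2
            (fun i hi => ((hcon i hi).mono fun j hj h => (not_lt.2 (hj h.1 h.2.1)) h.2.2))
        obtain ⟨j, hj1, hj2⟩ := (hev.and hQall).exists
        obtain ⟨i, hi, hQ⟩ := hj2
        exact hj1 i hi hQ
      obtain ⟨i, hiA, hfreqi⟩ := hfreq
      have hislack : i ∈ slack a b := by
        simp only [slack, Finset.mem_filter, Finset.mem_univ, true_and]
        by_contra hcon
        push_neg at hcon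
        have hall : ∀ j : ℕ, ⟪a i, w j⟫ = b i :=
          fun j => le_antisymm (hwP j i) (hcon (w j) (hwP j))
        have h1 : Tendsto (fun j => ⟪a i, v j⟫) atTop (𝓝 ⟪a i, d⟫) :=
          ((Continuous.inner continuous_const continuous_id).tendsto d).comp hvtend
        have h2 : ∀ j, ⟪a i, v j⟫ = b i * ‖w j‖⁻¹ := by
          intro j
          rw [hvw j, real_inner_smul_right, hall j]
          ring
        have h3 : Tendsto (fun j => ⟪a i, v j⟫) atTop (𝓝 0) := by
          rw [show (fun j => ⟪a i, v j⟫) = fun j => b i * ‖w j‖⁻¹ from funext h2]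
          simpa using tendsto_const_nhds.mul hwinv_tend
        have h4 := tendsto_nhds_unique h1 h3
        have h5 : ⟪a i, d⟫ < 0 := (Finset.mem_filter.1 hiA).2
        rw [h4] at h5
        exact lt_irrefl 0 h5
      set a' : Fin (m+1) → EuclideanSpace ℝ (Fin N) := Fin.snoc a (-a i) with ha'def
      set b' : Fin (m+1) → ℝ := Fin.snoc b (-(b i)) with hb'def
      have hslt : (slack a' b').card < (slack a b).card := slack_card_lt a b i hislack
      have hcard' : S.card + (slack a' b').card < n :=
        lt_of_lt_of_le (Nat.add_lt_add_left hslt _) hcard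
      obtain ⟨j₀, hj₀⟩ := hfreqi.exists
      have hne' : {x : EuclideanSpace ℝ (Fin N) | ∀ i', ⟪a' i', x⟫ ≤ b' i'}.Nonempty :=
        ⟨w j₀ - t j₀ • d, (mem_newpoly a b i _).2 ⟨hj₀.1, hj₀.2.1⟩⟩
      obtain ⟨xs, hxsP', hxsmin⟩ := IH (S.card + (slack a' b').card) hcard'
        S (m+1) a' b' le_rfl hne'
      have hxsP : ∀ i', ⟪a i', xs⟫ ≤ b i' := ((mem_newpoly a b i xs).1 hxsP').1
      refine ⟨xs, hxsP, fun z hz => ?_⟩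
      have hxsle : F xs ≤ μ := by
        refine le_of_forall_lt_inv _ _ fun k => ?_
        obtain ⟨j, hQ, hjk⟩ := (hfreqi.and_eventually (eventually_ge_atTop k)).exists
        have h1 : F xs ≤ F (w j - t j • d) :=
          hxsmin _ ((mem_newpoly a b i _).2 ⟨hQ.1, hQ.2.1⟩)
        have hjk' : (1:ℝ)/((j:ℝ)+1) ≤ 1/((k:ℝ)+1) := by
          apply one_div_le_one_div_of_le (by positivity)
          have : (k:ℝ) ≤ (j:ℝ) := by exact_mod_cast hjk
          linarith
        linarith [hQ.2.2]
      exact le_trans hxsle (hμle z hz)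
    · -- impossible : no constraint limits movement along -d
      exfalso
      have hall0 : ∀ i, ⟪a i, d⟫ = 0 := by
        intro i
        rcases lt_or_eq_of_le (hR1 i) with h | h
        · exact absurd ⟨i, Finset.mem_filter.2 ⟨Finset.mem_univ i, h⟩⟩ hAne
        · exact h
      obtain ⟨j, hj1, hj2⟩ :=
        (hhalf.and (hwdtop.eventually (eventually_ge_atTop 9))).exists
      have ht : (0:ℝ) ≤ ⟪w j, d⟫ := by linarith
      have hmem : ∀ i, ⟪a i, w j - ⟪w j, d⟫ • d⟫ ≤ b i := by
        intro i
        rw [inner_sub_right, real_inner_smul_right, hall0 i, mul_zero, sub_zero]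
        exact hwP j i
      have hdropj := hdrop j ⟪w j, d⟫ ht le_rfl hmem
      have h9 : 9 * (‖w j‖/2) ≤ ⟪w j, d⟫ * ⟪w j, d⟫ :=
        mul_le_mul hj2 hj1 (by linarith [hwpos j]) (by linarith)
      have h5 : (1:ℝ)/((j:ℝ)+1) ≤ 1 := by
        rw [div_le_one (by positivity)]
        linarith [Nat.cast_nonneg (α := ℝ) j]
      have h6 : (1/((j:ℝ)+1)) * (2 * ‖w j‖) ≤ 2 * ‖w j‖ := by
        have := hwpos j
        nlinarith
      have := hwpos j
      nlinarith

end MainInduction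
end EMPPR

open scoped RealInnerProductSpace

/-- Existence of minimizers for the variational problem
`min_{x∈X} ½‖Hx − y‖² + λ ∑_c ⟨1, ψ_c(B_c |W_c x|)⟩`, where `X` is a closed
convex polyhedron, the `ψ_c` are continuous nonnegative piecewise-polynomial
functions with finitely many interval pieces, and the `B_c` have nonnegative
entries. -/
theorem exists_minimizer_piecewise_polynomial_reg {M N NC : ℕ}
    (H : Matrix (Fin M) (Fin N) ℝ) (y : EuclideanSpace ℝ (Fin M))
    (lam : ℝ) (hlam : 0 < lam)
    -- the closed convex polytope X
    (X : Set (EuclideanSpace ℝ (Fin N)))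
    (mX : ℕ) (aX : Fin mX → EuclideanSpace ℝ (Fin N)) (bX : Fin mX → ℝ)
    (hX : X = {x | ∀ i, ⟪aX i, x⟫ ≤ bX i}) (hXne : X.Nonempty)
    -- the filters and masks
    (W : Fin NC → Matrix (Fin N) (Fin N) ℝ)
    (B : Fin NC → Matrix (Fin N) (Fin N) ℝ)
    (hBnonneg : ∀ c i j, 0 ≤ B c i j)
    -- the potentials: continuous, nonnegative, piecewise polynomial
    (ψ : Fin NC → ℝ → ℝ)
    (hψcont : ∀ c, Continuous (ψ c))
    (hψnonneg : ∀ c t, 0 ≤ ψ c t)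
    (hψpp : ∀ c, ∃ (L : ℕ) (I : Fin L → Set ℝ) (p : Fin L → Polynomial ℝ),
      (∀ j, (I j).OrdConnected) ∧ (⋃ j, I j) = Set.univ ∧
      ∀ j, ∀ t ∈ I j, ψ c t = (p j).eval t)
    -- the objective
    (f : EuclideanSpace ℝ (Fin N) → ℝ)
    (hf : ∀ x, f x =
      (1 / 2) * ‖(show EuclideanSpace ℝ (Fin M) from WithLp.toLp 2 (H.mulVec x)) - y‖ ^ 2 +
        lam * ∑ c, ∑ k, ψ c ((B c).mulVec (fun n => |(W c).mulVec x n|) k)) :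
    ∃ xmin ∈ X, ∀ z ∈ X, f xmin ≤ f z := by
  have hdich : ∀ c, (∃ T, ∀ s, T ≤ s → ψ c s = ψ c T) ∨
      Filter.Tendsto (ψ c) Filter.atTop Filter.atTop :=
    fun c => EMPPR.psi_dichotomy (ψ c) (hψnonneg c) (hψpp c)
  have hne : {x : EuclideanSpace ℝ (Fin N) | ∀ i, ⟪aX i, x⟫ ≤ bX i}.Nonempty := by
    rw [← hX]; exact hXne
  obtain ⟨xmin, h1, h2⟩ := EMPPR.main_induction H y lam W B ψ hlam hBnonneg hψcont
    hψnonneg hdich ((Finset.univ : Finset (Fin NC × Fin N)).card +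
      (EMPPR.slack aX bX).card) Finset.univ mX aX bX le_rfl hne
  have hFf : ∀ x, EMPPR.Ffun H y lam W B ψ Finset.univ x = f x := by
    intro x
    rw [hf]
    unfold EMPPR.Ffun EMPPR.qfun EMPPR.gfun
    rw [Fintype.sum_prod_type]
    rfl
  refine ⟨xmin, by rw [hX]; exact h1, fun z hz => ?_⟩
  have hz' : ∀ i, ⟪aX i, z⟫ ≤ bX i := by rw [hX] at hz; exact hz
  have := h2 z hz'
  rwa [hFf, hFf] at this
end
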